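/- For the one-dimensional Gaussian scale model with generator G_θ(u) = e^θ u, base measure U = N(0,1), and Gaussian kernel k(x,y) = φ(x; y, l²), writing s = e^{2θ*}, the MMD metric tensor at θ* in dimension d equals g(θ*) = A_1 + A_2 + A_3 where A_1 = d² (2π)^{-d/2}(l²+2s)^{-d/2}, A_2 = -(2d²/(l²+s)) (2π)^{-d/2}(l²+2s)^{-d/2}[l² + s²/(l²+2s)], and A_3 = (2π)^{-d/2}(l²+2s)^{-d/2}[d²l²/(l²+2s) + (d²+2d) s²/(l²+2s)²]. -/

import Mathlib

open Finset MeasureTheory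

/-- `d`-dimensional isotropic Gaussian density with mean `m` and variance `v`. -/
noncomputable def gaussPdfD (d : ℕ) (x m : Fin d → ℝ) (v : ℝ) : ℝ :=
  (2 * Real.pi * v) ^ (-(d : ℝ) / 2)
    * Real.exp (-(∑ i, (x i - m i) ^ 2) / (2 * v))

/-!
In each coordinate the Gaussian part of the integrand is `φ(a; b, l²) φ(a; 0, s) φ(b; 0, s)`, and
`d - |x|²/s` is the sum over coordinates of `1 - x_i²/s`. After expanding both sums, Fubini
reduces the double integral to the one-dimensional pair integrals
`∫∫ (1 + c a²)(1 + c' b²) φ(a; b, l²) φ(a; 0, s) φ(b; 0, s) da db` with `c, c' ∈ {0, -1/s}`.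
Completing the square turns the one-dimensional factor into
`φ(0; 0, l² + 2s) φ(a; 0, w) φ(b; s a / (l² + s), l² s / (l² + s))`, `w = s (l² + s) / (l² + 2s)`,
so these are Gaussian moments of order at most four.
-/

open Real

noncomputable def gaussPdf (t m v : ℝ) : ℝ :=
  (2 * π * v) ^ (-(1 : ℝ) / 2) * exp (-(t - m) ^ 2 / (2 * v))

theorem gaussPdfD_eq_prod (d : ℕ) (x m : Fin d → ℝ) {v : ℝ} (hv : 0 ≤ v) :
    gaussPdfD d x m v = ∏ i, gaussPdf (x i) (m i) v := by
  simp only [gaussPdfD, gaussPdf]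
  rw [prod_mul_distrib, prod_const, card_univ, Fintype.card_fin,
    ← rpow_natCast, ← rpow_mul (by positivity), ← exp_sum, ← sum_div, ← sum_neg_distrib]
  congr 2
  ring

theorem gaussPdf_comm (t m v : ℝ) : gaussPdf t m v = gaussPdf m t v := by
  rw [gaussPdf, gaussPdf, ← neg_sub, neg_sq]

theorem gaussPdf_sub (t m v : ℝ) : gaussPdf (t - m) 0 v = gaussPdf t m v := by
  rw [gaussPdf, gaussPdf, sub_zero]

theorem gaussPdf_mul_gaussPdf {v₁ v₂ : ℝ} (h₁ : 0 < v₁) (h₂ : 0 < v₂) (t m : ℝ) :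
    gaussPdf t m v₁ * gaussPdf t 0 v₂
      = gaussPdf m 0 (v₁ + v₂) * gaussPdf t (v₂ * m / (v₁ + v₂)) (v₁ * v₂ / (v₁ + v₂)) := by
  simp only [gaussPdf]
  rw [mul_mul_mul_comm, ← exp_add, mul_mul_mul_comm _ (exp _), ← exp_add,
    ← mul_rpow (by positivity) (by positivity), ← mul_rpow (by positivity) (by positivity)]
  congr 2
  · field_simp
  · field_simp
    ring

theorem integral_pow_two_mul_mul_exp_neg_mul_sq {b : ℝ} (hb : 0 < b) (k : ℕ) :
    ∫ t : ℝ, t ^ (2 * k) * exp (-b * t ^ 2) = Gamma (k + 1 / 2) / b ^ (k + 1 / 2 : ℝ) := by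
  have h_even : ∫ t : ℝ, t ^ (2 * k) * exp (-b * t ^ 2)
      = 2 * ∫ t in Set.Ioi 0, t ^ ((2 * k : ℕ) : ℝ) * exp (-b * t ^ (2 : ℝ)) := by
    rw [← integral_comp_abs (f := fun t => t ^ ((2 * k : ℕ) : ℝ) * exp (-b * t ^ (2 : ℝ)))]
    congr with t
    rw [rpow_natCast, rpow_two, pow_mul, pow_mul, sq_abs]
  rw [h_even, integral_rpow_mul_exp_neg_mul_rpow two_pos
      (neg_one_lt_zero.trans_le (Nat.cast_nonneg _)) hb,
    show -(((2 * k : ℕ) : ℝ) + 1) / 2 = -(k + 1 / 2) by push_cast; ring,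
    show (((2 * k : ℕ) : ℝ) + 1) / 2 = k + 1 / 2 by push_cast; ring, rpow_neg hb.le]
  ring

theorem gaussPdf_zero_eq (t v : ℝ) :
    gaussPdf t 0 v = (2 * π * v) ^ (-(1 : ℝ) / 2) * exp (-(2 * v)⁻¹ * t ^ 2) := by
  unfold gaussPdf
  rw [sub_zero]
  congr 2
  ring

theorem gaussPdf_neg (t v : ℝ) : gaussPdf (-t) 0 v = gaussPdf t 0 v := by
  rw [gaussPdf_zero_eq, gaussPdf_zero_eq, neg_sq]

theorem integral_sub_pow_mul_gaussPdf (m v : ℝ) (n : ℕ) :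
    ∫ t, (t - m) ^ n * gaussPdf t m v = ∫ t, t ^ n * gaussPdf t 0 v := by
  simp_rw [← gaussPdf_sub _ m]
  exact integral_sub_right_eq_self (fun t => t ^ n * gaussPdf t 0 v) m

theorem integrable_sub_pow_mul_gaussPdf {v : ℝ} (hv : 0 < v) (m : ℝ) (n : ℕ) :
    Integrable fun t => (t - m) ^ n * gaussPdf t m v := by
  simp_rw [← gaussPdf_sub _ m]
  refine Integrable.comp_sub_right (f := fun t => t ^ n * gaussPdf t 0 v) ?_ m
  have h := integrable_rpow_mul_exp_neg_mul_sq (b := (2 * v)⁻¹) (by positivity) (s := n)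
    (neg_one_lt_zero.trans_le n.cast_nonneg)
  simp_rw [rpow_natCast] at h
  simp_rw [gaussPdf_zero_eq, mul_left_comm _ ((2 * π * v) ^ (-(1 : ℝ) / 2))]
  exact h.const_mul _

theorem integral_sub_pow_odd_mul_gaussPdf (m v : ℝ) (k : ℕ) :
    ∫ t, (t - m) ^ (2 * k + 1) * gaussPdf t m v = 0 := by
  have h := integral_neg_eq_self (fun t => t ^ (2 * k + 1) * gaussPdf t 0 v) volume
  simp only [Odd.neg_pow ⟨k, rfl⟩, gaussPdf_neg, neg_mul, integral_neg] at h
  rw [integral_sub_pow_mul_gaussPdf]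
  linarith

open scoped Nat in
theorem integral_sub_pow_even_mul_gaussPdf {v : ℝ} (hv : 0 < v) (m : ℝ) (k : ℕ) :
    ∫ t, (t - m) ^ (2 * k) * gaussPdf t m v = (2 * k - 1)‼ * v ^ k := by
  have h2v : 0 < 2 * v := by positivity
  simp_rw [integral_sub_pow_mul_gaussPdf, gaussPdf_zero_eq,
    mul_left_comm _ ((2 * π * v) ^ (-(1 : ℝ) / 2)), integral_const_mul,
    integral_pow_two_mul_mul_exp_neg_mul_sq (inv_pos.2 h2v), Gamma_nat_add_half,
    inv_rpow h2v.le, rpow_add h2v, rpow_natCast, ← sqrt_eq_rpow,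
    show -(1 : ℝ) / 2 = -(1 / 2) by ring, rpow_neg (by positivity : (0 : ℝ) ≤ 2 * π * v),
    ← sqrt_eq_rpow, show 2 * π * v = π * (2 * v) by ring, sqrt_mul pi_pos.le]
  have : 0 < √π := sqrt_pos.2 pi_pos
  have : 0 < √(2 * v) := sqrt_pos.2 h2v
  field_simp
  ring

section Quartic

variable {v : ℝ} (hv : 0 < v) (m c₀ c₁ c₂ c₃ c₄ : ℝ)

theorem quartic_mul_gaussPdf_eq_sum (t : ℝ) :
    (c₀ + c₁ * (t - m) + c₂ * (t - m) ^ 2 + c₃ * (t - m) ^ 3 + c₄ * (t - m) ^ 4)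
        * gaussPdf t m v
      = ∑ n : Fin 5, ![c₀, c₁, c₂, c₃, c₄] n * ((t - m) ^ (n : ℕ) * gaussPdf t m v) := by
  simp only [Fin.sum_univ_five, Fin.isValue, Matrix.cons_val_zero, Matrix.cons_val_one,
    Matrix.cons_val, Fin.coe_ofNat_eq_mod, Nat.reduceMod, pow_zero, one_mul, pow_one]
  ring

include hv

theorem integrable_quartic_mul_gaussPdf :
    Integrable fun t => (c₀ + c₁ * (t - m) + c₂ * (t - m) ^ 2 + c₃ * (t - m) ^ 3
      + c₄ * (t - m) ^ 4) * gaussPdf t m v := by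
  simp_rw [quartic_mul_gaussPdf_eq_sum]
  exact integrable_finsetSum _ fun (n : Fin 5) _ =>
    (integrable_sub_pow_mul_gaussPdf hv m n).const_mul _

theorem integral_quartic_mul_gaussPdf :
    ∫ t, (c₀ + c₁ * (t - m) + c₂ * (t - m) ^ 2 + c₃ * (t - m) ^ 3 + c₄ * (t - m) ^ 4)
        * gaussPdf t m v = c₀ + c₂ * v + 3 * c₄ * v ^ 2 := by
  simp_rw [quartic_mul_gaussPdf_eq_sum]
  rw [integral_finsetSum _ fun (n : Fin 5) _ =>
    (integrable_sub_pow_mul_gaussPdf hv m n).const_mul _]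
  have h₀ : ∫ t, gaussPdf t m v = 1 := by simpa using integral_sub_pow_even_mul_gaussPdf hv m 0
  have h₁ : ∫ t, (t - m) * gaussPdf t m v = 0 := by
    simpa using integral_sub_pow_odd_mul_gaussPdf m v 0
  have h₂ : ∫ t, (t - m) ^ 2 * gaussPdf t m v = v := by
    simpa using integral_sub_pow_even_mul_gaussPdf hv m 1
  have h₃ : ∫ t, (t - m) ^ 3 * gaussPdf t m v = 0 := integral_sub_pow_odd_mul_gaussPdf m v 1
  have h₄ : ∫ t, (t - m) ^ 4 * gaussPdf t m v = 3 * v ^ 2 := by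
    simpa using integral_sub_pow_even_mul_gaussPdf hv m 2
  simp only [integral_const_mul, Fin.sum_univ_five, Fin.isValue, Matrix.cons_val_zero,
    Matrix.cons_val_one, Matrix.cons_val, Fin.coe_ofNat_eq_mod, Nat.reduceMod, pow_zero, one_mul,
    pow_one, h₀, h₁, h₂, h₃, h₄]
  ring

theorem integrable_quadratic_mul_gaussPdf (c : ℝ) :
    Integrable fun t => (1 + c * t ^ 2) * gaussPdf t m v := by
  convert integrable_quartic_mul_gaussPdf hv m (1 + c * m ^ 2) (2 * c * m) c 0 0 using 2 with t
  ring

theorem integral_quadratic_mul_gaussPdf (c : ℝ) :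
    ∫ t, (1 + c * t ^ 2) * gaussPdf t m v = 1 + c * (v + m ^ 2) := by
  convert integral_quartic_mul_gaussPdf hv m (1 + c * m ^ 2) (2 * c * m) c 0 0 using 1
  · congr 1 with t
    ring
  · ring

theorem integrable_quadratic_mul_quadratic_mul_gaussPdf (α β γ δ : ℝ) :
    Integrable fun t => (α + β * t ^ 2) * (γ + δ * t ^ 2) * gaussPdf t 0 v := by
  convert integrable_quartic_mul_gaussPdf hv 0 (α * γ) 0 (α * δ + β * γ) 0 (β * δ) using 2 with t
  ring

theorem integral_quadratic_mul_quadratic_mul_gaussPdf (α β γ δ : ℝ) :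
    ∫ t, (α + β * t ^ 2) * (γ + δ * t ^ 2) * gaussPdf t 0 v
      = α * γ + (α * δ + β * γ) * v + 3 * β * δ * v ^ 2 := by
  convert integral_quartic_mul_gaussPdf hv 0 (α * γ) 0 (α * δ + β * γ) 0 (β * δ) using 1
  · congr 1 with t
    ring
  · ring

end Quartic

section ProductKernel

variable {ι : Type*} [Fintype ι]

theorem prod_ite_eq_mul_pow [DecidableEq ι] {M : Type*} [CommMonoid M] (i : ι) (A B : M) :
    ∏ k, (if k = i then A else B) = A * B ^ (Fintype.card ι - 1) := by
  rw [prod_ite, filter_eq', filter_ne']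
  simp only [mem_univ, ↓reduceIte, prod_const, card_singleton, pow_one, card_erase_of_mem,
    card_univ]

theorem prod_ite_ite_eq_mul_mul_pow [DecidableEq ι] {M : Type*} [CommMonoid M] {i j : ι}
    (hij : i ≠ j) (A B C : M) :
    ∏ k, (if k = i then A else if k = j then B else C) = A * B * C ^ (Fintype.card ι - 2) := by
  have hj : j ∈ univ.erase i := mem_erase.2 ⟨hij.symm, mem_univ j⟩
  rw [← mul_prod_erase _ _ (mem_univ i), if_pos rfl, ← mul_prod_erase _ _ hj, if_neg hij.symm,
    if_pos rfl, ← mul_assoc, prod_congr rfl fun k hk => by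
      rw [if_neg (ne_of_mem_erase (mem_of_mem_erase hk)), if_neg (ne_of_mem_erase hk)],
    prod_const, card_erase_of_mem hj, card_erase_of_mem (mem_univ i), card_univ, Nat.sub_sub]

theorem sum_ite_fst_eq_snd [DecidableEq ι] (X Y : ℝ) :
    ∑ ij : ι × ι, (if ij.1 = ij.2 then X else Y)
      = Fintype.card ι * X + Fintype.card ι * (Fintype.card ι - 1) * Y := by
  have hrow (i : ι) : ∑ j, (if i = j then X else Y) = X + (Fintype.card ι - 1) * Y := by
    rw [sum_ite, filter_eq, filter_ne]
    simp only [mem_univ, ↓reduceIte, sum_const, card_singleton, one_smul, card_erase_of_mem,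
      card_univ, nsmul_eq_mul, Nat.cast_sub (Fintype.card_pos_iff.2 ⟨i⟩), Nat.cast_one]
  rw [Fintype.sum_prod_type]
  simp only [hrow, sum_const, card_univ, nsmul_eq_mul]
  ring

theorem integral_integral_prod_eq_prod (F : ι → ℝ → ℝ → ℝ) :
    ∫ x : ι → ℝ, ∫ y : ι → ℝ, ∏ k, F k (x k) (y k) = ∏ k, ∫ a, ∫ b, F k a b := by
  calc _ = ∫ x : ι → ℝ, ∏ k, ∫ b, F k (x k) b :=
        integral_congr_ae (ae_of_all _ fun x => integral_fintype_prod_volume_eq_prod _)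
    _ = _ := integral_fintype_prod_volume_eq_prod fun k a => ∫ b, F k a b

theorem integral_integral_sum_prod_eq_sum_prod {κ : Type*} [Fintype κ]
    (F : κ → ι → ℝ → ℝ → ℝ) (hF : ∀ j k a, Integrable (F j k a))
    (hG : ∀ j k, Integrable fun a => ∫ b, F j k a b) :
    ∫ x : ι → ℝ, ∫ y : ι → ℝ, ∑ j, ∏ k, F j k (x k) (y k)
      = ∑ j, ∏ k, ∫ a, ∫ b, F j k a b := by
  have hinner (x : ι → ℝ) : ∫ y : ι → ℝ, ∑ j, ∏ k, F j k (x k) (y k)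
      = ∑ j, ∫ y : ι → ℝ, ∏ k, F j k (x k) (y k) :=
    integral_finsetSum _ fun j _ => Integrable.fintype_prod fun k => hF j k (x k)
  have hint (j : κ) : Integrable fun x : ι → ℝ => ∫ y : ι → ℝ, ∏ k, F j k (x k) (y k) := by
    simp_rw [integral_fintype_prod_volume_eq_prod]
    exact Integrable.fintype_prod (f := fun k a => ∫ b, F j k a b) (hG j)
  simp_rw [hinner]
  rw [integral_finsetSum _ fun j _ => hint j]
  simp_rw [integral_integral_prod_eq_prod]

noncomputable def pairIntegral (K : ℝ → ℝ → ℝ) (f g : ℝ → ℝ) : ℝ :=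
  ∫ a, ∫ b, f a * g b * K a b

theorem sum_mul_sum_mul_prod_eq_sum_prod [DecidableEq ι] (p q : ℝ → ℝ) (K : ℝ → ℝ → ℝ)
    (x y : ι → ℝ) :
    (∑ i, p (x i)) * (∑ j, q (y j)) * ∏ k, K (x k) (y k)
      = ∑ ij : ι × ι, ∏ k, (if k = ij.1 then p else 1) (x k) * (if k = ij.2 then q else 1) (y k)
          * K (x k) (y k) := by
  rw [sum_mul_sum, Fintype.sum_prod_type, sum_mul]
  refine sum_congr rfl fun i _ => ?_
  rw [sum_mul]
  refine sum_congr rfl fun j _ => ?_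
  simp only [prod_mul_distrib, ite_apply, Pi.one_apply, prod_ite_eq', mem_univ, if_true]

theorem integral_integral_sum_mul_sum_mul_prod [DecidableEq ι] (p q : ℝ → ℝ)
    (K : ℝ → ℝ → ℝ) (hK : ∀ a, Integrable (K a)) (hqK : ∀ a, Integrable fun b => q b * K a b)
    (h₁ : Integrable fun a => ∫ b, K a b) (h₂ : Integrable fun a => p a * ∫ b, K a b)
    (h₃ : Integrable fun a => ∫ b, q b * K a b)
    (h₄ : Integrable fun a => p a * ∫ b, q b * K a b) :
    ∫ x : ι → ℝ, ∫ y : ι → ℝ, (∑ i, p (x i)) * (∑ j, q (y j)) * ∏ k, K (x k) (y k)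
      = Fintype.card ι * (pairIntegral K p q * pairIntegral K 1 1 ^ (Fintype.card ι - 1))
        + Fintype.card ι * (Fintype.card ι - 1) * (pairIntegral K p 1 * pairIntegral K 1 q
          * pairIntegral K 1 1 ^ (Fintype.card ι - 2)) := by
  simp_rw [sum_mul_sum_mul_prod_eq_sum_prod]
  rw [integral_integral_sum_prod_eq_sum_prod fun (ij : ι × ι) (k : ι) (a b : ℝ) =>
    (if k = ij.1 then p else 1) a * (if k = ij.2 then q else 1) b * K a b]
  · have hterm (i j : ι) :
        ∏ k, ∫ a, ∫ b, (if k = i then p else 1) a * (if k = j then q else 1) b * K a b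
          = if i = j then pairIntegral K p q * pairIntegral K 1 1 ^ (Fintype.card ι - 1)
            else pairIntegral K p 1 * pairIntegral K 1 q
              * pairIntegral K 1 1 ^ (Fintype.card ι - 2) := by
      change ∏ k, pairIntegral K (if k = i then p else 1) (if k = j then q else 1) = _
      split_ifs with hij
      · subst hij
        rw [← prod_ite_eq_mul_pow i]
        exact prod_congr rfl fun k _ => by split_ifs <;> rfl
      · rw [← prod_ite_ite_eq_mul_mul_pow hij]
        refine prod_congr rfl fun k _ => ?_
        split_ifs with hi hj hj
        · exact absurd (hi.symm.trans hj) hij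
        all_goals rfl
    simp only [hterm, sum_ite_fst_eq_snd]
  · intro ij k a
    simp_rw [mul_assoc]
    refine Integrable.const_mul ?_ _
    split_ifs
    · exact hqK a
    · simpa using hK a
  · intro ij k
    simp_rw [mul_assoc, integral_const_mul]
    split_ifs
    · exact h₄
    · simpa using h₂
    · simpa using h₃
    · simpa using h₁

end ProductKernel

/-- `r` is the kernel variance `l²` and `s` the variance of the model. -/
noncomputable def gaussKernelDensity (r s a b : ℝ) : ℝ :=
  gaussPdf a b r * gaussPdf a 0 s * gaussPdf b 0 s

section GaussKernel

variable {r s : ℝ} (hr : 0 < r) (hs : 0 < s)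
include hr hs

theorem gaussKernelDensity_eq (a b : ℝ) :
    gaussKernelDensity r s a b
      = gaussPdf 0 0 (r + 2 * s) * gaussPdf a 0 (s * (r + s) / (r + 2 * s))
        * gaussPdf b (s / (r + s) * a) (r * s / (r + s)) := by
  have h₁ := gaussPdf_mul_gaussPdf hr hs b a
  have h₂ := gaussPdf_mul_gaussPdf (add_pos hr hs) hs a 0
  rw [mul_zero, zero_div, add_assoc, ← two_mul] at h₂
  rw [gaussKernelDensity, gaussPdf_comm a b, mul_right_comm, h₁, mul_right_comm, h₂,
    mul_div_right_comm s a, mul_comm (r + s) s]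

theorem integrable_quadratic_mul_gaussKernelDensity (c a : ℝ) :
    Integrable fun b => (1 + c * b ^ 2) * gaussKernelDensity r s a b := by
  simp_rw [gaussKernelDensity_eq hr hs a, mul_left_comm (1 + c * _ ^ 2)]
  exact (integrable_quadratic_mul_gaussPdf (by positivity) _ c).const_mul _

theorem integral_quadratic_mul_gaussKernelDensity (c a : ℝ) :
    ∫ b, (1 + c * b ^ 2) * gaussKernelDensity r s a b
      = gaussPdf 0 0 (r + 2 * s) * gaussPdf a 0 (s * (r + s) / (r + 2 * s))
        * (1 + c * (r * s / (r + s) + (s / (r + s) * a) ^ 2)) := by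
  simp_rw [gaussKernelDensity_eq hr hs a, mul_left_comm (1 + c * _ ^ 2)]
  rw [integral_const_mul, integral_quadratic_mul_gaussPdf (by positivity)]

theorem quadratic_mul_integral_quadratic_mul_gaussKernelDensity (c c' a : ℝ) :
    (1 + c * a ^ 2) * ∫ b, (1 + c' * b ^ 2) * gaussKernelDensity r s a b
      = gaussPdf 0 0 (r + 2 * s) * ((1 + c * a ^ 2)
          * (1 + c' * (r * s / (r + s)) + c' * (s / (r + s)) ^ 2 * a ^ 2)
          * gaussPdf a 0 (s * (r + s) / (r + 2 * s))) := by
  rw [integral_quadratic_mul_gaussKernelDensity hr hs]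
  ring

theorem integrable_quadratic_mul_integral_quadratic_mul_gaussKernelDensity (c c' : ℝ) :
    Integrable fun a => (1 + c * a ^ 2) * ∫ b, (1 + c' * b ^ 2) * gaussKernelDensity r s a b := by
  simp_rw [quadratic_mul_integral_quadratic_mul_gaussKernelDensity hr hs]
  exact (integrable_quadratic_mul_quadratic_mul_gaussPdf (by positivity) _ _ _ _).const_mul _

/-- `1 + c w` is the mean of `1 + c a²` for `a ~ N(0, w)`, and `2 c c' (s² / (r + 2s))²` is
`c c' Cov(a², b²)`, since `Cov(a, b) = s² / (r + 2s)`. -/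
theorem pairIntegral_gaussKernelDensity (c c' : ℝ) :
    pairIntegral (gaussKernelDensity r s) (fun t => 1 + c * t ^ 2) (fun t => 1 + c' * t ^ 2)
      = gaussPdf 0 0 (r + 2 * s) * ((1 + c * (s * (r + s) / (r + 2 * s)))
          * (1 + c' * (s * (r + s) / (r + 2 * s))) + 2 * c * c' * (s ^ 2 / (r + 2 * s)) ^ 2) := by
  simp_rw [pairIntegral, mul_assoc, integral_const_mul,
    quadratic_mul_integral_quadratic_mul_gaussKernelDensity hr hs]
  rw [integral_const_mul, integral_quadratic_mul_quadratic_mul_gaussPdf (by positivity)]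
  have : r + s ≠ 0 := by positivity
  have : r + 2 * s ≠ 0 := by positivity
  field_simp
  ring

end GaussKernel

theorem integral_integral_sum_quadratic_mul_prod_gaussKernelDensity {ι : Type*} [Fintype ι]
    [DecidableEq ι] {r s : ℝ} (hr : 0 < r) (hs : 0 < s) (c : ℝ) :
    ∫ x : ι → ℝ, ∫ y : ι → ℝ, (∑ i, (1 + c * x i ^ 2)) * (∑ j, (1 + c * y j ^ 2))
        * ∏ k, gaussKernelDensity r s (x k) (y k)
      = gaussPdf 0 0 (r + 2 * s) ^ Fintype.card ι
        * (Fintype.card ι ^ 2 * (1 + c * (s * (r + s) / (r + 2 * s))) ^ 2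
          + 2 * Fintype.card ι * (c * (s ^ 2 / (r + 2 * s))) ^ 2) := by
  rw [integral_integral_sum_mul_sum_mul_prod _ _ _
    (fun a => by simpa using integrable_quadratic_mul_gaussKernelDensity hr hs 0 a)
    (integrable_quadratic_mul_gaussKernelDensity hr hs c)
    (by simpa using integrable_quadratic_mul_integral_quadratic_mul_gaussKernelDensity hr hs 0 0)
    (by simpa using integrable_quadratic_mul_integral_quadratic_mul_gaussKernelDensity hr hs c 0)
    (by simpa using integrable_quadratic_mul_integral_quadratic_mul_gaussKernelDensity hr hs 0 c)
    (integrable_quadratic_mul_integral_quadratic_mul_gaussKernelDensity hr hs c c),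
    show (1 : ℝ → ℝ) = fun t => 1 + 0 * t ^ 2 by ext; simp]
  simp only [pairIntegral_gaussKernelDensity hr hs]
  obtain _ | _ | n := Fintype.card ι
  · simp
  · push_cast
    ring
  · push_cast
    simp only [add_tsub_cancel_right]
    ring

theorem natCast_sub_sum_sq_div_eq_sum {d : ℕ} (z : Fin d → ℝ) (s : ℝ) :
    (d : ℝ) - (∑ i, z i ^ 2) / s = ∑ i, (1 + -s⁻¹ * z i ^ 2) := by
  rw [sum_add_distrib, ← mul_sum, sum_const, card_univ, Fintype.card_fin, nsmul_one]
  ring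

theorem gaussPdfD_mul_gaussPdfD_mul_gaussPdfD {d : ℕ} {r s : ℝ} (hr : 0 ≤ r) (hs : 0 ≤ s)
    (x y : Fin d → ℝ) :
    gaussPdfD d x y r * gaussPdfD d x 0 s * gaussPdfD d y 0 s
      = ∏ k, gaussKernelDensity r s (x k) (y k) := by
  simp only [gaussPdfD_eq_prod _ _ _ hr, gaussPdfD_eq_prod _ _ _ hs, gaussKernelDensity,
    prod_mul_distrib, Pi.zero_apply]

/-- MMD metric tensor for the Gaussian scale model (generator
`G_θ(u) = e^θ u`, base measure `N(0, I_d)`, Gaussian kernel of lengthscale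
`l`), at `θ*` with `s = e^{2θ*}`. After integration by parts the tensor is
the double integral
`∫∫ (d−|x|²/s)(d−|y|²/s) φ(x;y,l²) φ(x;0,s) φ(y;0,s) dx dy`, and it equals
`A₁ + A₂ + A₃` with the three explicit terms below. -/
theorem gaussian_scale_metric_tensor (d : ℕ) (l s : ℝ) (hl : 0 < l) (hs : 0 < s) :
    (∫ x : Fin d → ℝ, ∫ y : Fin d → ℝ,
        ((d : ℝ) - (∑ i, x i ^ 2) / s) * ((d : ℝ) - (∑ i, y i ^ 2) / s)
          * gaussPdfD d x y (l ^ 2) * gaussPdfD d x 0 s * gaussPdfD d y 0 s)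
      = (d : ℝ) ^ 2 * (2 * Real.pi) ^ (-(d : ℝ) / 2) * (l ^ 2 + 2 * s) ^ (-(d : ℝ) / 2)
        + (-(2 * (d : ℝ) ^ 2 / (l ^ 2 + s)) * (2 * Real.pi) ^ (-(d : ℝ) / 2)
            * (l ^ 2 + 2 * s) ^ (-(d : ℝ) / 2) * (l ^ 2 + s ^ 2 / (l ^ 2 + 2 * s)))
        + (2 * Real.pi) ^ (-(d : ℝ) / 2) * (l ^ 2 + 2 * s) ^ (-(d : ℝ) / 2)
            * ((d : ℝ) ^ 2 * l ^ 2 / (l ^ 2 + 2 * s)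
              + ((d : ℝ) ^ 2 + 2 * (d : ℝ)) * s ^ 2 / (l ^ 2 + 2 * s) ^ 2) := by
  have hr : 0 < l ^ 2 := by positivity
  have hZ : (2 * π) ^ (-(d : ℝ) / 2) * (l ^ 2 + 2 * s) ^ (-(d : ℝ) / 2)
      = gaussPdf 0 0 (l ^ 2 + 2 * s) ^ d := by
    rw [gaussPdf, sub_zero, zero_pow two_ne_zero, neg_zero, zero_div, exp_zero, mul_one,
      ← mul_rpow (by positivity) (by positivity), ← rpow_natCast _ d, ← rpow_mul (by positivity)]
    ring_nf
  have hintegrand (x y : Fin d → ℝ) :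
      ((d : ℝ) - (∑ i, x i ^ 2) / s) * ((d : ℝ) - (∑ i, y i ^ 2) / s)
          * gaussPdfD d x y (l ^ 2) * gaussPdfD d x 0 s * gaussPdfD d y 0 s
        = (∑ i, (1 + -s⁻¹ * x i ^ 2)) * (∑ j, (1 + -s⁻¹ * y j ^ 2))
          * ∏ k, gaussKernelDensity (l ^ 2) s (x k) (y k) := by
    rw [← gaussPdfD_mul_gaussPdfD_mul_gaussPdfD hr.le hs.le, natCast_sub_sum_sq_div_eq_sum,
      natCast_sub_sum_sq_div_eq_sum]
    ring
  simp_rw [hintegrand]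
  rw [integral_integral_sum_quadratic_mul_prod_gaussKernelDensity hr hs, Fintype.card_fin, ← hZ]
  field_simp
  ring
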